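/- arXiv:2009.09286 — 2 statements merged into one kernel-verified Lean document; each statement's English description precedes it below -/
import Mathlib

section
/- Under instrument unconfoundedness, instrument overlap, monotonicity and instrumentation, the parameter θ₁ = E[Y(1) | D(1) > D(0)] is identified by inverse probability weighting: the denominator E[Z·D/π*] − E[(1−Z)·D/(1−π*)] equals P(D(1) > D(0)) > 0, and E[Y(1) | D(1) > D(0)] = ( E[Z·D·Y/π*(X)] − E[(1−Z)·D·Y/(1−π*(X))] ) / ( E[Z·D/π*(X)] − E[(1−Z)·D/(1−π*(X))] ). -/
/-!
Unconfoundedness says that, given `X`, the instrument `Z` is independent of the potential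
variables `V = (Y(1), D(1), D(0))`; for a binary `Z` this means that conditioning on `V` as well
does not change the propensity: `E[Z | X, V] = π*(X)`. Pulling the `σ(X, V)`-measurable factor
`W / π*` out of the conditional expectation gives the weighting identities
`E[Z W / π*] = E[W]` and `E[(1 - Z) W / (1 - π*)] = E[W]` for every `σ(X, V)`-measurable `W`.
On `{Z = 1}` the observed `D` and `D Y` are `D(1)` and `D(1) Y(1)`, on `{Z = 0}` they are `D(0)`
and `D(0) Y(1)`, so the four weighted means are `E[D(1)]`, `E[D(0)]`, `E[D(1) Y(1)]` and
`E[D(0) Y(1)]`. Monotonicity makes `D(1) - D(0)` the indicator of the compliers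
`{D(0) < D(1)}`, so the two differences are `P(D(0) < D(1))` and `E[Y(1); D(0) < D(1)]`, and
instrumentation makes the first one nonzero.
-/

open MeasureTheory ProbabilityTheory MeasurableSpace Set

namespace MeasurableSpace

variable {Ω : Type*}

theorem sup_eq_generateFrom_image2_inter (m₁ m₂ : MeasurableSpace Ω) :
    m₁ ⊔ m₂ =
      generateFrom (image2 (· ∩ ·) {s | MeasurableSet[m₁] s} {s | MeasurableSet[m₂] s}) := by
  refine le_antisymm (sup_le (fun s hs => ?_) (fun s hs => ?_)) (generateFrom_le ?_)
  · exact measurableSet_generateFrom ⟨s, hs, univ, MeasurableSet.univ, inter_univ s⟩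
  · exact measurableSet_generateFrom ⟨univ, MeasurableSet.univ, s, hs, univ_inter s⟩
  · rintro _ ⟨g, hg, v, hv, rfl⟩
    exact (le_sup_left (a := m₁) (b := m₂) g hg).inter (le_sup_right (a := m₁) (b := m₂) v hv)

theorem isPiSystem_image2_inter (m₁ m₂ : MeasurableSpace Ω) :
    IsPiSystem (image2 (· ∩ ·) {s | MeasurableSet[m₁] s} {s | MeasurableSet[m₂] s}) := by
  rintro _ ⟨g₁, hg₁, v₁, hv₁, rfl⟩ _ ⟨g₂, hg₂, v₂, hv₂, rfl⟩ -
  exact ⟨g₁ ∩ g₂, hg₁.inter hg₂, v₁ ∩ v₂, hv₁.inter hv₂, inter_inter_inter_comm ..⟩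

end MeasurableSpace

namespace MeasureTheory

variable {Ω : Type*} {m mΩ : MeasurableSpace Ω} {μ : Measure Ω}

section ZeroOne

variable {f d₁ d₀ : Ω → ℝ}

theorem ae_eq_indicator_of_ae_zero_or_one (hf : ∀ᵐ ω ∂μ, f ω = 0 ∨ f ω = 1) :
    f =ᵐ[μ] {ω | f ω = 1}.indicator 1 := by
  filter_upwards [hf] with ω h
  rcases h with h | h <;> simp [h]

theorem integrable_of_ae_zero_or_one [IsFiniteMeasure μ] (hfm : Measurable f)
    (hf : ∀ᵐ ω ∂μ, f ω = 0 ∨ f ω = 1) : Integrable f μ := by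
  refine (integrable_const (1 : ℝ)).mono' hfm.aestronglyMeasurable ?_
  filter_upwards [hf] with ω h
  rcases h with h | h <;> simp [h]

theorem integral_eq_measureReal_of_ae_zero_or_one (hfm : Measurable f)
    (hf : ∀ᵐ ω ∂μ, f ω = 0 ∨ f ω = 1) : ∫ ω, f ω ∂μ = μ.real {ω | f ω = 1} := by
  rw [integral_congr_ae (ae_eq_indicator_of_ae_zero_or_one hf)]
  exact integral_indicator_one (hfm (measurableSet_singleton 1))

theorem sub_ae_eq_indicator_of_ae_le (h₁ : ∀ᵐ ω ∂μ, d₁ ω = 0 ∨ d₁ ω = 1)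
    (h₀ : ∀ᵐ ω ∂μ, d₀ ω = 0 ∨ d₀ ω = 1) (hle : ∀ᵐ ω ∂μ, d₀ ω ≤ d₁ ω) :
    d₁ - d₀ =ᵐ[μ] {ω | d₀ ω < d₁ ω}.indicator 1 := by
  filter_upwards [h₁, h₀, hle] with ω h₁ h₀ hle
  rcases h₁ with h₁ | h₁ <;> rcases h₀ with h₀ | h₀ <;> simp [h₁, h₀] at hle ⊢
  linarith

theorem integral_sub_eq_measureReal_of_ae_le [IsFiniteMeasure μ] (hd₁ : Measurable d₁)
    (hd₀ : Measurable d₀) (h₁ : ∀ᵐ ω ∂μ, d₁ ω = 0 ∨ d₁ ω = 1)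
    (h₀ : ∀ᵐ ω ∂μ, d₀ ω = 0 ∨ d₀ ω = 1) (hle : ∀ᵐ ω ∂μ, d₀ ω ≤ d₁ ω) :
    ∫ ω, d₁ ω ∂μ - ∫ ω, d₀ ω ∂μ = μ.real {ω | d₀ ω < d₁ ω} := by
  rw [← integral_sub (integrable_of_ae_zero_or_one hd₁ h₁) (integrable_of_ae_zero_or_one hd₀ h₀)]
  exact (integral_congr_ae (sub_ae_eq_indicator_of_ae_le h₁ h₀ hle)).trans
    (integral_indicator_one (measurableSet_lt hd₀ hd₁))

theorem integral_mul_sub_eq_setIntegral_of_ae_le {y : Ω → ℝ} (hd₁ : Measurable d₁)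
    (hd₀ : Measurable d₀) (hy : Integrable y μ) (h₁ : ∀ᵐ ω ∂μ, d₁ ω = 0 ∨ d₁ ω = 1)
    (h₀ : ∀ᵐ ω ∂μ, d₀ ω = 0 ∨ d₀ ω = 1) (hle : ∀ᵐ ω ∂μ, d₀ ω ≤ d₁ ω) :
    ∫ ω, d₁ ω * y ω ∂μ - ∫ ω, d₀ ω * y ω ∂μ = ∫ ω in {ω | d₀ ω < d₁ ω}, y ω ∂μ := by
  have hbdd : ∀ {d : Ω → ℝ}, (∀ᵐ ω ∂μ, d ω = 0 ∨ d ω = 1) → ∀ᵐ ω ∂μ, ‖d ω‖ ≤ 1 := fun hd =>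
    hd.mono fun ω h => by rcases h with h | h <;> simp [h]
  rw [← integral_sub (hy.bdd_mul hd₁.aestronglyMeasurable (hbdd h₁))
    (hy.bdd_mul hd₀.aestronglyMeasurable (hbdd h₀)), ← integral_indicator (measurableSet_lt hd₀ hd₁)]
  refine integral_congr_ae ?_
  filter_upwards [sub_ae_eq_indicator_of_ae_le h₁ h₀ hle] with ω h
  rw [← sub_mul, ← Pi.sub_apply, h]
  by_cases hω : d₀ ω < d₁ ω <;> simp [hω]

end ZeroOne

section CondExp

variable [IsFiniteMeasure μ]

theorem ae_eq_condExp_of_forall_setIntegral_eq_of_isPiSystem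
    {E : Type*} [NormedAddCommGroup E] [NormedSpace ℝ E] [CompleteSpace E]
    (hm : m ≤ mΩ) {C : Set (Set Ω)} (hgen : m = generateFrom C) (hC : IsPiSystem C)
    (huniv : univ ∈ C) {f g : Ω → E} (hf : Integrable f μ) (hg : Integrable g μ)
    (hgm : StronglyMeasurable[m] g) (hfg : ∀ s ∈ C, ∫ x in s, g x ∂μ = ∫ x in s, f x ∂μ) :
    g =ᵐ[μ] μ[f | m] := by
  have key : ∀ s, MeasurableSet[m] s → ∫ x in s, g x ∂μ = ∫ x in s, f x ∂μ := by
    intro s hs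
    induction s, hs using induction_on_inter hgen hC with
    | empty => simp
    | basic s hs => exact hfg s hs
    | compl s hs ih =>
      have hall := hfg univ huniv
      rw [setIntegral_univ, setIntegral_univ] at hall
      rw [setIntegral_compl (hm s hs) hg, setIntegral_compl (hm s hs) hf, ih, hall]
    | iUnion s hdisj hs ih =>
      rw [integral_iUnion (fun i => hm _ (hs i)) hdisj hg.integrableOn,
        integral_iUnion (fun i => hm _ (hs i)) hdisj hf.integrableOn]
      exact tsum_congr ih
  exact ae_eq_condExp_of_forall_setIntegral_eq hm hf (fun _ _ _ => hg.integrableOn)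
    (fun s hs _ => key s hs) hgm.aestronglyMeasurable

theorem setIntegral_inter_eq_setIntegral_mul_condExp (hm : m ≤ mΩ) {f : Ω → ℝ}
    (hf : Integrable f μ) (hfm : StronglyMeasurable[m] f) {g v : Set Ω} (hg : MeasurableSet[m] g)
    (hv : MeasurableSet v) :
    ∫ x in g ∩ v, f x ∂μ = ∫ x in g, f x * (μ⟦v | m⟧) x ∂μ := by
  have hind : v.indicator f = f * v.indicator fun _ => (1 : ℝ) := by
    ext x
    by_cases hx : x ∈ v <;> simp [hx]
  have hfv : Integrable (f * v.indicator fun _ => (1 : ℝ)) μ := hind ▸ hf.indicator hv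
  calc ∫ x in g ∩ v, f x ∂μ = ∫ x in g, (f * v.indicator fun _ => (1 : ℝ)) x ∂μ := by
        rw [← hind, setIntegral_indicator hv]
    _ = ∫ x in g, μ[f * v.indicator fun _ => (1 : ℝ) | m] x ∂μ :=
        (setIntegral_condExp hm hfv hg).symm
    _ = ∫ x in g, f x * (μ⟦v | m⟧) x ∂μ := by
        refine setIntegral_congr_ae (hm g hg) ?_
        filter_upwards [condExp_mul_of_stronglyMeasurable_left hfm hfv
          ((integrable_const 1).indicator hv)] with x hx _ using hx

theorem integral_mul_div_eq_of_ae_eq_condExp (hm : m ≤ mΩ) {Z π W : Ω → ℝ}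
    (hπ : π =ᵐ[μ] μ[Z | m]) (hπ0 : ∀ᵐ ω ∂μ, π ω ≠ 0) (hW : StronglyMeasurable[m] W)
    (hZ : Integrable Z μ) (hint : Integrable (fun ω => Z ω * W ω / π ω) μ) :
    ∫ ω, Z ω * W ω / π ω ∂μ = ∫ ω, W ω ∂μ := by
  set φ : Ω → ℝ := fun ω => W ω / μ[Z | m] ω
  have hφ : StronglyMeasurable[m] φ :=
    (hW.measurable.div stronglyMeasurable_condExp.measurable).stronglyMeasurable
  have hφZ : (fun ω => Z ω * W ω / π ω) =ᵐ[μ] φ * Z := by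
    filter_upwards [hπ] with ω h
    simp only [Pi.mul_apply, φ, h]
    ring
  calc ∫ ω, Z ω * W ω / π ω ∂μ = ∫ ω, μ[φ * Z | m] ω ∂μ :=
        (integral_congr_ae hφZ).trans (integral_condExp hm).symm
    _ = ∫ ω, W ω ∂μ := by
        refine integral_congr_ae ?_
        filter_upwards [condExp_mul_of_stronglyMeasurable_left hφ (hint.congr hφZ) hZ, hπ, hπ0]
          with ω h hπω hπ0ω
        rw [h, Pi.mul_apply, div_mul_cancel₀ _ (hπω ▸ hπ0ω)]

theorem one_sub_ae_eq_condExp_one_sub (hm : m ≤ mΩ) {Z π : Ω → ℝ} (hπ : π =ᵐ[μ] μ[Z | m])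
    (hZ : Integrable Z μ) : (fun ω => 1 - π ω) =ᵐ[μ] μ[fun ω => 1 - Z ω | m] := by
  filter_upwards [condExp_sub (m := m) (integrable_const (1 : ℝ)) hZ, hπ] with ω h hπω
  rw [show (fun ω => 1 - Z ω) = (fun _ => (1 : ℝ)) - Z from rfl, h, Pi.sub_apply,
    condExp_const hm, hπω]

end CondExp

end MeasureTheory

namespace ProbabilityTheory

variable {Ω : Type*} {m' mΩ : MeasurableSpace Ω} [StandardBorelSpace Ω] {μ : Measure Ω}
  [IsFiniteMeasure μ]

theorem condExp_indicator_sup_ae_eq_of_condIndep {m₁ m₂ : MeasurableSpace Ω} (hm' : m' ≤ mΩ)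
    (hm₁ : m₁ ≤ mΩ) (hm₂ : m₂ ≤ mΩ) (h : CondIndep m' m₁ m₂ hm' μ) {t : Set Ω}
    (ht : MeasurableSet[m₂] t) :
    μ⟦t | m' ⊔ m₁⟧ =ᵐ[μ] μ⟦t | m'⟧ := by
  refine (ae_eq_condExp_of_forall_setIntegral_eq_of_isPiSystem (sup_le hm' hm₁)
    (sup_eq_generateFrom_image2_inter m' m₁) (isPiSystem_image2_inter m' m₁)
    ⟨univ, .univ, univ, .univ, univ_inter _⟩ ((integrable_const 1).indicator (hm₂ t ht))
    integrable_condExp (stronglyMeasurable_condExp.mono le_sup_left) ?_).symm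
  rintro _ ⟨g, hg, v, hv, rfl⟩
  have hvt := (condIndep_iff m' m₁ m₂ hm' hm₁ hm₂ μ).1 h v t hv ht
  calc ∫ x in g ∩ v, (μ⟦t | m'⟧) x ∂μ = ∫ x in g, (μ⟦t | m'⟧) x * (μ⟦v | m'⟧) x ∂μ :=
        setIntegral_inter_eq_setIntegral_mul_condExp hm' integrable_condExp
          stronglyMeasurable_condExp hg (hm₁ v hv)
    _ = ∫ x in g, 1 * (μ⟦v ∩ t | m'⟧) x ∂μ := by
        refine setIntegral_congr_ae (hm' g hg) ?_
        filter_upwards [hvt] with x hx _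
        rw [hx, Pi.mul_apply, one_mul, mul_comm]
    _ = ∫ x in g ∩ (v ∩ t), 1 ∂μ :=
        (setIntegral_inter_eq_setIntegral_mul_condExp hm' (integrable_const 1)
          stronglyMeasurable_const hg ((hm₁ v hv).inter (hm₂ t ht))).symm
    _ = ∫ x in g ∩ v, t.indicator (fun _ => 1) x ∂μ := by
        rw [setIntegral_indicator (hm₂ t ht), inter_assoc]

theorem condExp_sup_comap_ae_eq_of_condIndepFun (hm' : m' ≤ mΩ) {Z : Ω → ℝ}
    {β : Type*} [MeasurableSpace β] {V : Ω → β} (hV : Measurable V) (hZm : Measurable Z)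
    (hZ : ∀ᵐ ω ∂μ, Z ω = 0 ∨ Z ω = 1) (h : CondIndepFun m' hm' V Z μ) :
    μ[Z | m' ⊔ MeasurableSpace.comap V inferInstance] =ᵐ[μ] μ[Z | m'] := by
  have hZB := ae_eq_indicator_of_ae_zero_or_one hZ
  refine (condExp_congr_ae hZB).trans ((condExp_indicator_sup_ae_eq_of_condIndep hm' hV.comap_le
    hZm.comap_le ((condIndepFun_iff_condIndep m' hm' V Z μ).1 h) ?_).trans
    (condExp_congr_ae hZB.symm))
  exact ⟨{1}, measurableSet_singleton 1, rfl⟩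

variable {β : Type*} [MeasurableSpace β] {V : Ω → β} {Z : Ω → ℝ} {g : β → ℝ}

theorem integral_mul_div_condExp_of_condIndepFun (hm' : m' ≤ mΩ) (hV : Measurable V)
    (hZm : Measurable Z) (hZ : ∀ᵐ ω ∂μ, Z ω = 0 ∨ Z ω = 1) (h : CondIndepFun m' hm' V Z μ)
    (hπ0 : ∀ᵐ ω ∂μ, μ[Z | m'] ω ≠ 0) (hg : Measurable g)
    (hint : Integrable (fun ω => Z ω * g (V ω) / μ[Z | m'] ω) μ) :
    ∫ ω, Z ω * g (V ω) / μ[Z | m'] ω ∂μ = ∫ ω, g (V ω) ∂μ :=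
  integral_mul_div_eq_of_ae_eq_condExp (sup_le hm' hV.comap_le)
    (condExp_sup_comap_ae_eq_of_condIndepFun hm' hV hZm hZ h).symm hπ0
    ((hg.comp (comap_measurable V)).mono (le_sup_right (a := m')) le_rfl).stronglyMeasurable
    (integrable_of_ae_zero_or_one hZm hZ) hint

theorem integral_one_sub_mul_div_condExp_of_condIndepFun (hm' : m' ≤ mΩ) (hV : Measurable V)
    (hZm : Measurable Z) (hZ : ∀ᵐ ω ∂μ, Z ω = 0 ∨ Z ω = 1) (h : CondIndepFun m' hm' V Z μ)
    (hπ1 : ∀ᵐ ω ∂μ, 1 - μ[Z | m'] ω ≠ 0) (hg : Measurable g)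
    (hint : Integrable (fun ω => (1 - Z ω) * g (V ω) / (1 - μ[Z | m'] ω)) μ) :
    ∫ ω, (1 - Z ω) * g (V ω) / (1 - μ[Z | m'] ω) ∂μ = ∫ ω, g (V ω) ∂μ := by
  have hZint := integrable_of_ae_zero_or_one hZm hZ
  exact integral_mul_div_eq_of_ae_eq_condExp (sup_le hm' hV.comap_le)
    (one_sub_ae_eq_condExp_one_sub (sup_le hm' hV.comap_le)
      (condExp_sup_comap_ae_eq_of_condIndepFun hm' hV hZm hZ h).symm hZint) hπ1
    ((hg.comp (comap_measurable V)).mono (le_sup_right (a := m')) le_rfl).stronglyMeasurable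
    ((integrable_const 1).sub hZint) hint

end ProbabilityTheory

theorem stmt_2_general
    {Ω : Type*} [mΩ : MeasurableSpace Ω] [StandardBorelSpace Ω]
    (P : Measure Ω) [IsProbabilityMeasure P]
    (Z D1 D0 Y1 Y0 : Ω → ℝ)
    (hZmeas : Measurable Z) (hD1meas : Measurable D1) (hD0meas : Measurable D0)
    (hY1meas : Measurable Y1)
    (hZbin : ∀ᵐ ω ∂P, Z ω = 0 ∨ Z ω = 1)
    (hD1bin : ∀ᵐ ω ∂P, D1 ω = 0 ∨ D1 ω = 1)
    (hD0bin : ∀ᵐ ω ∂P, D0 ω = 0 ∨ D0 ω = 1)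
    (𝓖 : MeasurableSpace Ω)
    (h𝓖le : 𝓖 ≤ mΩ)
    (πs : Ω → ℝ) (hπs : πs = P[Z | 𝓖])
    (hunconf : CondIndepFun 𝓖 h𝓖le (fun ω => (Y1 ω, Y0 ω, D1 ω, D0 ω)) Z P)
    (hoverlap : ∀ᵐ ω ∂P, 0 < πs ω ∧ πs ω < 1)
    (hmono : ∀ᵐ ω ∂P, D0 ω ≤ D1 ω)
    (hinstr : P {ω | D1 ω = 1} ≠ P {ω | D0 ω = 1})
    (D Y : Ω → ℝ)
    (hD : D = fun ω => Z ω * D1 ω + (1 - Z ω) * D0 ω)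
    (hY : Y = fun ω => D ω * Y1 ω + (1 - D ω) * Y0 ω)
    (hint1 : Integrable (fun ω => Z ω * D ω / πs ω) P)
    (hint2 : Integrable (fun ω => (1 - Z ω) * D ω / (1 - πs ω)) P)
    (hint3 : Integrable (fun ω => Z ω * D ω * Y ω / πs ω) P)
    (hint4 : Integrable (fun ω => (1 - Z ω) * D ω * Y ω / (1 - πs ω)) P)
    (hint5 : Integrable Y1 P) :
    ((∫ ω, Z ω * D ω / πs ω ∂P) - (∫ ω, (1 - Z ω) * D ω / (1 - πs ω) ∂P)
        = (P {ω | D0 ω < D1 ω}).toReal) ∧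
    0 < (P {ω | D0 ω < D1 ω}).toReal ∧
    (∫ ω in {ω | D0 ω < D1 ω}, Y1 ω ∂P) / (P {ω | D0 ω < D1 ω}).toReal =
      ((∫ ω, Z ω * D ω * Y ω / πs ω ∂P) - (∫ ω, (1 - Z ω) * D ω * Y ω / (1 - πs ω) ∂P)) /
        ((∫ ω, Z ω * D ω / πs ω ∂P) - (∫ ω, (1 - Z ω) * D ω / (1 - πs ω) ∂P)) := by
  subst hπs
  have hV : Measurable[mΩ] fun ω => (Y1 ω, D1 ω, D0 ω) := hY1meas.prodMk (hD1meas.prodMk hD0meas)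
  have hunconf' : CondIndepFun 𝓖 h𝓖le (fun ω => (Y1 ω, D1 ω, D0 ω)) Z P :=
    hunconf.comp (φ := fun v => (v.1, v.2.2.1, v.2.2.2)) (by fun_prop) measurable_id
  have hπ0 : ∀ᵐ ω ∂P, P[Z | 𝓖] ω ≠ 0 := hoverlap.mono fun ω h => h.1.ne'
  have hπ1 : ∀ᵐ ω ∂P, 1 - P[Z | 𝓖] ω ≠ 0 := hoverlap.mono fun ω h => sub_ne_zero.2 h.2.ne'
  have hobs : ∀ᵐ ω ∂P, Z ω * D ω / P[Z | 𝓖] ω = Z ω * D1 ω / P[Z | 𝓖] ω ∧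
      (1 - Z ω) * D ω / (1 - P[Z | 𝓖] ω) = (1 - Z ω) * D0 ω / (1 - P[Z | 𝓖] ω) ∧
      Z ω * D ω * Y ω / P[Z | 𝓖] ω = Z ω * (D1 ω * Y1 ω) / P[Z | 𝓖] ω ∧
      (1 - Z ω) * D ω * Y ω / (1 - P[Z | 𝓖] ω) =
        (1 - Z ω) * (D0 ω * Y1 ω) / (1 - P[Z | 𝓖] ω) := by
    filter_upwards [hZbin, hD1bin, hD0bin] with ω hz h1 h0
    subst hD hY
    rcases hz with hz | hz <;> rcases h1 with h1 | h1 <;> rcases h0 with h0 | h0 <;>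
      simp [hz, h1, h0]
  have r1 := (integral_congr_ae (hobs.mono fun _ h => h.1)).trans
    (integral_mul_div_condExp_of_condIndepFun h𝓖le hV hZmeas hZbin hunconf' hπ0
      (g := fun v => v.2.1) (by fun_prop) (hint1.congr (hobs.mono fun _ h => h.1)))
  have r2 := (integral_congr_ae (hobs.mono fun _ h => h.2.1)).trans
    (integral_one_sub_mul_div_condExp_of_condIndepFun h𝓖le hV hZmeas hZbin hunconf' hπ1
      (g := fun v => v.2.2) (by fun_prop) (hint2.congr (hobs.mono fun _ h => h.2.1)))
  have r3 := (integral_congr_ae (hobs.mono fun _ h => h.2.2.1)).trans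
    (integral_mul_div_condExp_of_condIndepFun h𝓖le hV hZmeas hZbin hunconf' hπ0
      (g := fun v => v.2.1 * v.1) (by fun_prop) (hint3.congr (hobs.mono fun _ h => h.2.2.1)))
  have r4 := (integral_congr_ae (hobs.mono fun _ h => h.2.2.2)).trans
    (integral_one_sub_mul_div_condExp_of_condIndepFun h𝓖le hV hZmeas hZbin hunconf' hπ1
      (g := fun v => v.2.2 * v.1) (by fun_prop) (hint4.congr (hobs.mono fun _ h => h.2.2.2)))
  have hden := integral_sub_eq_measureReal_of_ae_le hD1meas hD0meas hD1bin hD0bin hmono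
  have hpos : 0 < P.real {ω | D0 ω < D1 ω} := by
    refine measureReal_nonneg.lt_of_ne fun h => hinstr ((measureReal_eq_measureReal_iff).1 ?_)
    rw [← integral_eq_measureReal_of_ae_zero_or_one hD1meas hD1bin,
      ← integral_eq_measureReal_of_ae_zero_or_one hD0meas hD0bin]
    linarith
  refine ⟨r1 ▸ r2 ▸ hden, hpos, ?_⟩
  rw [r1, r2, r3, r4, hden,
    integral_mul_sub_eq_setIntegral_of_ae_le hD1meas hD0meas hint5 hD1bin hD0bin hmono]
  rfl

/-- Under instrument unconfoundedness, overlap, monotonicity and instrumentation,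
`θ₁ = E[Y(1) | D(1) > D(0)]` is identified by inverse probability weighting. -/
theorem stmt_2
    {Ω : Type*} [mΩ : MeasurableSpace Ω] [StandardBorelSpace Ω] [Nonempty Ω]
    {𝒳 : Type*} [MeasurableSpace 𝒳] [StandardBorelSpace 𝒳]
    (P : Measure Ω) [IsProbabilityMeasure P]
    (Z D1 D0 Y1 Y0 : Ω → ℝ) (X : Ω → 𝒳)
    (hZmeas : Measurable Z) (hD1meas : Measurable D1) (hD0meas : Measurable D0)
    (hY1meas : Measurable Y1) (hY0meas : Measurable Y0) (hXmeas : Measurable X)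
    (hZbin : ∀ᵐ ω ∂P, Z ω = 0 ∨ Z ω = 1)
    (hD1bin : ∀ᵐ ω ∂P, D1 ω = 0 ∨ D1 ω = 1)
    (hD0bin : ∀ᵐ ω ∂P, D0 ω = 0 ∨ D0 ω = 1)
    (𝓖 : MeasurableSpace Ω) (h𝓖 : 𝓖 = MeasurableSpace.comap X inferInstance)
    (h𝓖le : 𝓖 ≤ mΩ)
    (πs : Ω → ℝ) (hπs : πs = P[Z | 𝓖])
    (hunconf : CondIndepFun 𝓖 h𝓖le (fun ω => (Y1 ω, Y0 ω, D1 ω, D0 ω)) Z P)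
    (hoverlap : ∀ᵐ ω ∂P, 0 < πs ω ∧ πs ω < 1)
    (hmono : ∀ᵐ ω ∂P, D0 ω ≤ D1 ω)
    (hinstr : P {ω | D1 ω = 1} ≠ P {ω | D0 ω = 1})
    (D Y : Ω → ℝ)
    (hD : D = fun ω => Z ω * D1 ω + (1 - Z ω) * D0 ω)
    (hY : Y = fun ω => D ω * Y1 ω + (1 - D ω) * Y0 ω)
    (hint1 : Integrable (fun ω => Z ω * D ω / πs ω) P)
    (hint2 : Integrable (fun ω => (1 - Z ω) * D ω / (1 - πs ω)) P)
    (hint3 : Integrable (fun ω => Z ω * D ω * Y ω / πs ω) P)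
    (hint4 : Integrable (fun ω => (1 - Z ω) * D ω * Y ω / (1 - πs ω)) P)
    (hint5 : Integrable Y1 P) :
    ((∫ ω, Z ω * D ω / πs ω ∂P) - (∫ ω, (1 - Z ω) * D ω / (1 - πs ω) ∂P)
        = (P {ω | D0 ω < D1 ω}).toReal) ∧
    0 < (P {ω | D0 ω < D1 ω}).toReal ∧
    (∫ ω in {ω | D0 ω < D1 ω}, Y1 ω ∂P) / (P {ω | D0 ω < D1 ω}).toReal =
      ((∫ ω, Z ω * D ω * Y ω / πs ω ∂P) - (∫ ω, (1 - Z ω) * D ω * Y ω / (1 - πs ω) ∂P)) /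
        ((∫ ω, Z ω * D ω / πs ω ∂P) - (∫ ω, (1 - Z ω) * D ω / (1 - πs ω) ∂P)) :=
  stmt_2_general (mΩ := mΩ) P Z D1 D0 Y1 Y0 hZmeas hD1meas hD0meas hY1meas hZbin hD1bin hD0bin 𝓖
    h𝓖le πs hπs hunconf hoverlap hmono hinstr D Y hD hY hint1 hint2 hint3 hint4 hint5
end

section
/- If γ̂ minimizes the Lasso-penalized calibration objective L over ℝ^{1+p}, then for every j ∈ {1,…,p} the weighted average of the j-th covariate over the instrumented group is calibrated to the overall average within tolerance λ: | (1/n)·Σ_{i=1}^n Z_i·f_{ij}/π̂_i − (1/n)·Σ_{i=1}^n f_{ij} | ≤ λ, and if moreover γ̂_j ≠ 0 then this inequality holds with equality. -/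
open Finset Real

/-!
Vary only the coordinate `γ_{j+1}`: along the line `γ̂ + t • e_{j+1}` the objective is a smooth
function `φ t` plus `λ |γ̂_{j+1} + t|` (up to a constant), and it is minimized at `t = 0`. Since
`Z / π̂ = Z (1 + exp (-γ̂ᵀf))`, the calibration gap is exactly `-φ'(0)`. One-sided difference
quotients at `0` give `|φ'(0)| ≤ λ`; when `γ̂_{j+1} ≠ 0` the penalty is differentiable at `0`, so
Fermat's rule gives `φ'(0) = ∓λ`.
-/

theorem HasDerivAt.nonneg_of_isMinOn_Ioi {h : ℝ → ℝ} {d x : ℝ} (hd : HasDerivAt h d x)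
    (hmin : IsMinOn h (Set.Ioi x) x) : 0 ≤ d := by
  have hslope : Filter.Tendsto (slope h x) (nhdsWithin x (Set.Ioi x)) (nhds d) :=
    (hasDerivAt_iff_tendsto_slope.mp hd).mono_left (nhdsWithin_mono _ fun t ht => ne_of_gt ht)
  refine ge_of_tendsto hslope ?_
  filter_upwards [self_mem_nhdsWithin] with t (ht : x < t)
  rw [slope_def_field]
  exact div_nonneg (sub_nonneg.mpr (isMinOn_iff.mp hmin t ht)) (sub_nonneg.mpr ht.le)

theorem HasDerivAt.abs_le_of_forall_le_add_abs {φ : ℝ → ℝ} {D c : ℝ} (hφ : HasDerivAt φ D 0)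
    (hmin : ∀ t, φ 0 ≤ φ t + c * |t|) : |D| ≤ c := by
  have hright : 0 ≤ D + c := by
    refine ((hφ.add ((hasDerivAt_id 0).const_mul c)).congr_deriv (by simp))
      |>.nonneg_of_isMinOn_Ioi (isMinOn_iff.mpr fun t (ht : 0 < t) => ?_)
    simpa [abs_of_pos ht] using hmin t
  have hleft : 0 ≤ -D + c := by
    have hrefl : HasDerivAt (fun t => φ (-t)) (-D) 0 := by
      simpa [Function.comp_def] using hφ.comp_of_eq (0 : ℝ) (hasDerivAt_neg 0) neg_zero.symm
    refine ((hrefl.add ((hasDerivAt_id 0).const_mul c)).congr_deriv (by simp))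
      |>.nonneg_of_isMinOn_Ioi (isMinOn_iff.mpr fun t (ht : 0 < t) => ?_)
    simpa [abs_of_pos ht] using hmin (-t)
  exact abs_le.mpr ⟨by linarith, by linarith⟩

theorem HasDerivAt.abs_eq_of_forall_le_add_abs {φ : ℝ → ℝ} {D c b : ℝ} (hφ : HasDerivAt φ D 0)
    (hc : 0 ≤ c) (hb : b ≠ 0) (hmin : ∀ t, φ 0 + c * |b| ≤ φ t + c * |b + t|) : |D| = c := by
  have hpen : HasDerivAt (fun t => c * |b + t|) (c * SignType.sign b) 0 := by
    simpa using ((hasDerivAt_abs (by simpa using hb)).comp_const_add b 0).const_mul c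
  have hlocal : IsLocalMin (fun t => φ t + c * |b + t|) 0 :=
    Filter.Eventually.of_forall fun t => by simpa using hmin t
  have hzero : D + c * SignType.sign b = 0 := hlocal.hasDerivAt_eq_zero (hφ.add hpen)
  rcases hb.lt_or_gt with hneg | hpos
  · simp only [hneg, _root_.sign_neg, SignType.coe_neg, SignType.coe_one, mul_neg, mul_one] at hzero
    rw [show D = c by linarith, abs_of_nonneg hc]
  · simp only [hpos, sign_pos, SignType.coe_one, mul_one] at hzero
    rw [show D = -c by linarith, abs_neg, abs_of_nonneg hc]

section Calibration

variable {n : ℕ} {ι : Type*} [Fintype ι]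

noncomputable def calibrationLoss (Z : Fin n → ℝ) (f : Fin n → ι → ℝ) (γ : ι → ℝ) : ℝ :=
  (1 / (n : ℝ)) * ∑ i, (Z i * exp (-(γ ⬝ᵥ f i)) + (1 - Z i) * (γ ⬝ᵥ f i))

theorem hasDerivAt_calibrationLoss_add_smul (Z : Fin n → ℝ) (f : Fin n → ι → ℝ) (γ v : ι → ℝ) :
    HasDerivAt (fun t : ℝ => calibrationLoss Z f (γ + t • v))
      ((1 / (n : ℝ)) * ∑ i, ((1 - Z i) - Z i * exp (-(γ ⬝ᵥ f i))) * (v ⬝ᵥ f i)) 0 := by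
  have hscore : ∀ i, HasDerivAt (fun t : ℝ => (γ + t • v) ⬝ᵥ f i) (v ⬝ᵥ f i) 0 := fun i => by
    simp only [add_dotProduct, smul_dotProduct, smul_eq_mul]
    simpa using ((hasDerivAt_id 0).mul_const (v ⬝ᵥ f i)).const_add (γ ⬝ᵥ f i)
  have hterm : ∀ i, HasDerivAt
      (fun t : ℝ => Z i * exp (-((γ + t • v) ⬝ᵥ f i)) + (1 - Z i) * ((γ + t • v) ⬝ᵥ f i))
      (((1 - Z i) - Z i * exp (-(γ ⬝ᵥ f i))) * (v ⬝ᵥ f i)) 0 := fun i => by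
    refine (((hscore i).fun_neg.exp.const_mul (Z i)).fun_add
      ((hscore i).const_mul (1 - Z i))).congr_deriv ?_
    simp only [zero_smul, add_zero]
    ring
  exact (HasDerivAt.fun_sum fun i _ => hterm i).const_mul _

theorem inverse_propensity_gap_eq (Z c a q : Fin n → ℝ) (hq : ∀ i, q i = 1 / (1 + exp (-a i))) :
    (1 / (n : ℝ)) * ∑ i, Z i * c i / q i - (1 / (n : ℝ)) * ∑ i, c i
      = -((1 / (n : ℝ)) * ∑ i, ((1 - Z i) - Z i * exp (-a i)) * c i) := by
  rw [← mul_sub, ← sum_sub_distrib, ← mul_neg, ← sum_neg_distrib]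
  congr 1
  refine sum_congr rfl fun i _ => ?_
  rw [hq, one_div, div_inv_eq_mul]
  ring

end Calibration

def lassoPenalty {p : ℕ} (γ : Fin (p + 1) → ℝ) : ℝ := ∑ j : Fin p, |γ j.succ|

theorem lassoPenalty_add_smul_single {p : ℕ} (γ : Fin (p + 1) → ℝ) (j : Fin p) (t : ℝ) :
    lassoPenalty (γ + t • (Pi.single j.succ 1 : Fin (p + 1) → ℝ))
      = lassoPenalty γ - |γ j.succ| + |γ j.succ + t| := by
  simp only [lassoPenalty]
  rw [← add_sum_erase _ _ (mem_univ j), ← add_sum_erase _ _ (mem_univ j)]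
  have hrest : ∑ k ∈ univ.erase j, |(γ + t • (Pi.single j.succ 1 : Fin (p + 1) → ℝ)) k.succ|
      = ∑ k ∈ univ.erase j, |γ k.succ| :=
    sum_congr rfl fun k hk => by simp [ne_of_mem_erase hk]
  rw [hrest]
  simp only [Pi.add_apply, Pi.smul_apply, Pi.single_eq_same, smul_eq_mul, mul_one, mem_univ,
    sum_erase_eq_sub, add_sub_cancel]
  ring

theorem stmt_6_general (n p : ℕ)
    (Z : Fin n → ℝ)
    (f : Fin n → Fin (p + 1) → ℝ)
    (lam : ℝ) (hlam : 0 ≤ lam)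
    (L : (Fin (p + 1) → ℝ) → ℝ)
    (hL : ∀ γ, L γ = (1 / (n : ℝ)) * ∑ i, (Z i * Real.exp (-(∑ j, γ j * f i j))
          + (1 - Z i) * (∑ j, γ j * f i j))
        + lam * ∑ j : Fin p, |γ j.succ|)
    (γhat : Fin (p + 1) → ℝ) (hmin : ∀ γ, L γhat ≤ L γ)
    (πhat : Fin n → ℝ)
    (hπ : ∀ i, πhat i = 1 / (1 + Real.exp (-(∑ j, γhat j * f i j)))) :
    ∀ j : Fin p,
      |(1 / (n : ℝ)) * ∑ i, Z i * f i j.succ / πhat i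
          - (1 / (n : ℝ)) * ∑ i, f i j.succ| ≤ lam ∧
      (γhat j.succ ≠ 0 →
        |(1 / (n : ℝ)) * ∑ i, Z i * f i j.succ / πhat i
            - (1 / (n : ℝ)) * ∑ i, f i j.succ| = lam) := by
  intro j
  have hL' : ∀ γ, L γ = calibrationLoss Z f γ + lam * lassoPenalty γ := hL
  set φ := fun t : ℝ => calibrationLoss Z f (γhat + t • Pi.single j.succ 1)
  have hφ := hasDerivAt_calibrationLoss_add_smul Z f γhat (Pi.single j.succ 1)
  simp only [single_dotProduct, one_mul] at hφ
  have hline : ∀ t, φ 0 + lam * |γhat j.succ| ≤ φ t + lam * |γhat j.succ + t| := fun t => by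
    have h := hmin (γhat + t • Pi.single j.succ 1)
    have h0 : L γhat = φ 0 + lam * lassoPenalty γhat := by simp [hL', φ]
    rw [h0, hL', lassoPenalty_add_smul_single] at h
    linarith
  have hgap := inverse_propensity_gap_eq Z (fun i => f i j.succ) (fun i => γhat ⬝ᵥ f i) πhat hπ
  beta_reduce at hgap
  rw [hgap, abs_neg]
  refine ⟨hφ.abs_le_of_forall_le_add_abs fun t => ?_,
    fun hb => hφ.abs_eq_of_forall_le_add_abs hlam hb hline⟩
  have htri := mul_le_mul_of_nonneg_left (abs_add_le (γhat j.succ) t) hlam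
  rw [mul_add] at htri
  linarith [hline t]

/-- If `γ̂` minimizes the Lasso-penalized calibration objective, each covariate is
calibrated within tolerance `λ`, with equality at active coordinates. -/
theorem stmt_6 (n p : ℕ) (hn : 1 ≤ n) (hp : 1 ≤ p)
    (Z : Fin n → ℝ) (hZ : ∀ i, Z i = 0 ∨ Z i = 1)
    (f : Fin n → Fin (p + 1) → ℝ) (hf0 : ∀ i, f i 0 = 1)
    (lam : ℝ) (hlam : 0 ≤ lam)
    (L : (Fin (p + 1) → ℝ) → ℝ)
    (hL : ∀ γ, L γ = (1 / (n : ℝ)) * ∑ i, (Z i * Real.exp (-(∑ j, γ j * f i j))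
          + (1 - Z i) * (∑ j, γ j * f i j))
        + lam * ∑ j : Fin p, |γ j.succ|)
    (γhat : Fin (p + 1) → ℝ) (hmin : ∀ γ, L γhat ≤ L γ)
    (πhat : Fin n → ℝ)
    (hπ : ∀ i, πhat i = 1 / (1 + Real.exp (-(∑ j, γhat j * f i j)))) :
    ∀ j : Fin p,
      |(1 / (n : ℝ)) * ∑ i, Z i * f i j.succ / πhat i
          - (1 / (n : ℝ)) * ∑ i, f i j.succ| ≤ lam ∧
      (γhat j.succ ≠ 0 →
        |(1 / (n : ℝ)) * ∑ i, Z i * f i j.succ / πhat i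
            - (1 / (n : ℝ)) * ∑ i, f i j.succ| = lam) :=
  stmt_6_general n p Z f lam hlam L hL γhat hmin πhat hπ
end
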